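/- Let d ≥ 2, p and q₁,…,q_{d-1} real with |p| ≤ 1 and |q_r| ≤ 1, and let H_l (for l = 1,…,d) be the (d+1)×(d+1) Hermitian matrices defined by (H_l)₀₀ = 1, (H_l)_{jj} = 1, (H_l)_{0j} = (H_l)_{j0} = p, (H_l)_{jk} = q_{k-j}·exp(i·(k-j)·(2π/d)·l) for 1 ≤ j < k ≤ d. If every H_l is positive semidefinite, then p² ≤ 1/d. -/

import Mathlib

/-!
Averaging the `H_l` over `l = 1, …, d` kills every entry `(j, k)` with `1 ≤ j ≠ k ≤ d`, since it
is a multiple of a full sum of powers of the nontrivial `d`-th root of unity `exp (± 2πi (k - j) / d)`.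
The average is therefore the arrowhead matrix with `1` on the diagonal and `p` in the first row and
column, which is positive semidefinite as a convex combination of positive semidefinite matrices.
Its quadratic form at `(-d p, 1, …, 1)` equals `d (1 - d p²)`, whence `d p² ≤ 1`.
-/

/-- The Hermitian matrix `H_l` of restrictions of the state. -/
noncomputable def Hmat (d : ℕ) (p : ℝ) (q : ℕ → ℝ) (l : ℕ) :
    Matrix (Fin (d + 1)) (Fin (d + 1)) ℂ :=
  Matrix.of fun j k =>
    if (j : ℕ) = (k : ℕ) then 1
    else if (j : ℕ) = 0 ∨ (k : ℕ) = 0 then (p : ℂ)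
    else if (j : ℕ) < (k : ℕ) then
      ((q ((k : ℕ) - (j : ℕ)) : ℝ) : ℂ) *
        Complex.exp (Complex.I * (((k : ℕ) - (j : ℕ) : ℕ) : ℂ) * (2 * Real.pi / d) * l)
    else
      ((q ((j : ℕ) - (k : ℕ)) : ℝ) : ℂ) *
        Complex.exp (-Complex.I * (((j : ℕ) - (k : ℕ) : ℕ) : ℂ) * (2 * Real.pi / d) * l)

open Finset Matrix

theorem sum_Icc_pow_eq_zero {R : Type*} [CommRing R] [IsDomain R] {z : R} {d : ℕ}
    (hzd : z ^ d = 1) (hz : z ≠ 1) : ∑ l ∈ Icc 1 d, z ^ l = 0 := by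
  have hgeom : ∑ l ∈ range d, z ^ l = 0 := by
    have h := geom_sum_mul z d
    rw [hzd, sub_self] at h
    exact (mul_eq_zero.mp h).resolve_right (sub_ne_zero.mpr hz)
  rw [← Ico_add_one_right_eq_Icc, sum_Ico_eq_sum_range]
  simp [pow_add, ← mul_sum, hgeom]

namespace Complex

theorem sum_Icc_exp_eq_zero {d m : ℕ} (hm : m ≠ 0) (hmd : m < d) :
    ∑ l ∈ Icc 1 d, exp (I * m * (2 * Real.pi / d) * l) = 0 := by
  have hζ := isPrimitiveRoot_exp d (by omega)
  have hζd : (exp (2 * Real.pi * I / d) ^ m) ^ d = 1 := by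
    rw [pow_right_comm, hζ.pow_eq_one, one_pow]
  convert sum_Icc_pow_eq_zero hζd (hζ.pow_ne_one_of_pos_of_lt hm hmd) using 2 with l
  rw [← pow_mul, ← exp_nat_mul]
  push_cast
  ring_nf

theorem sum_Icc_exp_neg_eq_zero {d m : ℕ} (hm : m ≠ 0) (hmd : m < d) :
    ∑ l ∈ Icc 1 d, exp (-I * m * (2 * Real.pi / d) * l) = 0 := by
  have hconj (l : ℕ) : exp (-I * m * (2 * Real.pi / d) * l)
      = starRingEnd ℂ (exp (I * m * (2 * Real.pi / d) * l)) := by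
    rw [← exp_conj]
    simp [map_ofNat]
  simp only [hconj, ← map_sum, sum_Icc_exp_eq_zero hm hmd, map_zero]

end Complex

noncomputable def arrowhead {𝕜 : Type*} [RCLike 𝕜] (n : ℕ) (p : ℝ) :
    Matrix (Fin (n + 1)) (Fin (n + 1)) 𝕜 :=
  Matrix.of fun j k => if j = k then 1 else if j = 0 ∨ k = 0 then (p : 𝕜) else 0

section Arrowhead

variable {𝕜 : Type*} [RCLike 𝕜] {n : ℕ} {p : ℝ}

theorem arrowhead_mulVec_cons :
    arrowhead n p *ᵥ Fin.cons (-(n * p : 𝕜)) (fun _ => 1) =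
      Fin.cons 0 (fun _ => ((1 - n * p ^ 2 : ℝ) : 𝕜)) := by
  ext j
  refine Fin.cases ?_ (fun j => ?_) j
  · simp [mulVec, dotProduct, Fin.sum_univ_succ, arrowhead, eq_comm (a := (0 : Fin _))]
  · simp [mulVec, dotProduct, Fin.sum_univ_succ, arrowhead, Fin.succ_ne_zero,
      RCLike.algebraMap_eq_ofReal]
    ring

theorem star_cons_dotProduct_arrowhead_mulVec_cons :
    star (Fin.cons (-(n * p : 𝕜)) (fun _ => 1) : Fin (n + 1) → 𝕜) ⬝ᵥ
        (arrowhead n p *ᵥ Fin.cons (-(n * p : 𝕜)) (fun _ => 1)) =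
      ((n * (1 - n * p ^ 2) : ℝ) : 𝕜) := by
  simp [arrowhead_mulVec_cons, dotProduct, Fin.sum_univ_succ, RCLike.algebraMap_eq_ofReal]
  ring

open ComplexOrder in
theorem mul_sq_le_one_of_posSemidef_arrowhead (h : (arrowhead (𝕜 := 𝕜) n p).PosSemidef) :
    n * p ^ 2 ≤ 1 := by
  have hform := h.dotProduct_mulVec_nonneg (Fin.cons (-(n * p : 𝕜)) (fun _ => 1))
  rw [star_cons_dotProduct_arrowhead_mulVec_cons, RCLike.ofReal_nonneg] at hform
  rcases n.eq_zero_or_pos with rfl | hn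
  · simp
  · nlinarith [(Nat.cast_pos (α := ℝ)).mpr hn]

end Arrowhead

theorem sum_Icc_Hmat (d : ℕ) (p : ℝ) (q : ℕ → ℝ) :
    ∑ l ∈ Icc 1 d, Hmat d p q l = d • arrowhead d p := by
  ext j k
  simp only [Matrix.sum_apply, Matrix.smul_apply, Hmat, arrowhead, Matrix.of_apply, nsmul_eq_mul,
    Fin.val_inj, Fin.val_eq_zero_iff]
  have hj := j.isLt
  have hk := k.isLt
  split_ifs with hjk h0 hlt
  · simp
  · simp
  all_goals simp only [not_or, ← Fin.val_ne_iff, Fin.val_zero] at h0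
  · rw [← mul_sum, Complex.sum_Icc_exp_eq_zero (by omega) (by omega), mul_zero, mul_zero]
  · rw [← mul_sum, Complex.sum_Icc_exp_neg_eq_zero (by omega) (by omega), mul_zero, mul_zero]

open ComplexOrder in
theorem posSemidef_Hmat_implies_general (d : ℕ) (hd : 2 ≤ d) (p : ℝ) (q : ℕ → ℝ)
    (hpos : ∀ l ∈ Finset.Icc 1 d, (Hmat d p q l).PosSemidef) :
    p ^ 2 ≤ 1 / d := by
  have hd_pos : (0 : ℝ) < d := Nat.cast_pos.mpr (by omega)
  have hA : (arrowhead d p : Matrix _ _ ℂ).PosSemidef := by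
    have hsum := posSemidef_sum _ hpos
    rw [sum_Icc_Hmat, ← Nat.cast_smul_eq_nsmul ℝ] at hsum
    simpa [smul_smul, hd_pos.ne'] using hsum.smul (inv_nonneg.mpr hd_pos.le)
  rw [le_div_iff₀ hd_pos]
  linarith [mul_sq_le_one_of_posSemidef_arrowhead hA]

open ComplexOrder in
theorem posSemidef_Hmat_implies (d : ℕ) (hd : 2 ≤ d) (p : ℝ) (q : ℕ → ℝ)
    (hp : |p| ≤ 1) (hq : ∀ r, |q r| ≤ 1)
    (hpos : ∀ l ∈ Finset.Icc 1 d, (Hmat d p q l).PosSemidef) :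
    p ^ 2 ≤ 1 / d :=
  posSemidef_Hmat_implies_general d hd p q hpos
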